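/- Let L : ℝ^n → ℝ be differentiable with β-Lipschitz gradient, θ ∈ ℝ^n, and let gᵢ, gⱼ ∈ ℝ^n be two sample gradients with gᵢ, gⱼ not both zero. Define scores sᵢ = ⟨∇L(θ), gᵢ⟩ and sⱼ = ⟨∇L(θ), gⱼ⟩, and utilities Δᵢ = L(θ) - L(θ - η•gᵢ), Δⱼ = L(θ) - L(θ - η•gⱼ). If sᵢ - sⱼ ≥ γ > 0 and 0 < η < 2γ / (β(‖gᵢ‖² + ‖gⱼ‖²)), then Δᵢ > Δⱼ. -/

import Mathlib

/-!
Along the segment `t ↦ x + t • v` the derivative of `f` moves by at most `β t ‖v‖²` from its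
value at `0`, so comparing with the parabolas `t ↦ t ⟪∇f x, v⟫ ± β t² ‖v‖² / 2` (by
monotonicity) gives the second-order Taylor bound `|f (x + v) - f x - ⟪∇f x, v⟫| ≤ β ‖v‖² / 2`.
Applied to the two gradient steps, the utilities are `η sᵢ` and `η sⱼ` up to errors
`β η² ‖gᵢ‖² / 2` and `β η² ‖gⱼ‖² / 2`, and the step-size bound makes the margin `η γ` exceed
their sum.
-/

open scoped RealInnerProductSpace

open Set

theorem sub_sub_mul_le_of_abs_deriv_sub_le {φ φ' : ℝ → ℝ} {C T : ℝ} (hT : 0 ≤ T)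
    (hφ : ∀ t ∈ Icc 0 T, HasDerivAt φ (φ' t) t)
    (hφ' : ∀ t ∈ Icc 0 T, |φ' t - φ' 0| ≤ C * t) :
    φ T - φ 0 - T * φ' 0 ≤ C / 2 * T ^ 2 := by
  set ψ : ℝ → ℝ := fun t => C / 2 * t ^ 2 + t * φ' 0 - φ t
  have hψ : ∀ t ∈ Icc 0 T, HasDerivAt ψ (C * t + φ' 0 - φ' t) t := fun t ht => by
    refine ((((hasDerivAt_pow 2 t).const_mul (C / 2)).add
      ((hasDerivAt_id t).mul_const (φ' 0))).sub (hφ t ht)).congr_deriv ?_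
    push_cast; ring
  have hmono : MonotoneOn ψ (Icc 0 T) := by
    refine monotoneOn_of_hasDerivWithinAt_nonneg (convex_Icc 0 T)
      (fun t ht => (hψ t ht).continuousAt.continuousWithinAt)
      (fun t ht => (hψ t (interior_subset ht)).hasDerivWithinAt) fun t ht => ?_
    have := (abs_le.1 (hφ' t (interior_subset ht))).2
    linarith
  have := hmono (left_mem_Icc.2 hT) (right_mem_Icc.2 hT) hT
  simp only [ψ] at this
  linarith

theorem abs_sub_sub_mul_le_of_abs_deriv_sub_le {φ φ' : ℝ → ℝ} {C T : ℝ} (hT : 0 ≤ T)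
    (hφ : ∀ t ∈ Icc 0 T, HasDerivAt φ (φ' t) t)
    (hφ' : ∀ t ∈ Icc 0 T, |φ' t - φ' 0| ≤ C * t) :
    |φ T - φ 0 - T * φ' 0| ≤ C / 2 * T ^ 2 := by
  have hneg := sub_sub_mul_le_of_abs_deriv_sub_le (φ := -φ) (φ' := -φ') hT
    (fun t ht => (hφ t ht).neg) fun t ht => by
      simpa only [Pi.neg_apply, ← neg_sub', abs_neg] using hφ' t ht
  simp only [Pi.neg_apply] at hneg
  exact abs_le.2 ⟨by linarith, sub_sub_mul_le_of_abs_deriv_sub_le hT hφ hφ'⟩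

theorem abs_sub_sub_inner_gradient_le {E : Type*} [NormedAddCommGroup E] [InnerProductSpace ℝ E]
    [CompleteSpace E] {f : E → ℝ} {β : ℝ} (hf : Differentiable ℝ f)
    (hlip : ∀ x y, ‖gradient f x - gradient f y‖ ≤ β * ‖x - y‖) (x v : E) :
    |f (x + v) - f x - ⟪gradient f x, v⟫| ≤ β / 2 * ‖v‖ ^ 2 := by
  have hline : ∀ t : ℝ, HasDerivAt (fun t : ℝ => f (x + t • v)) ⟪gradient f (x + t • v), v⟫ t :=
    fun t => by
      have := (hf (x + t • v)).hasGradientAt.hasFDerivAt.comp_hasDerivAt t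
        (((hasDerivAt_id t).smul_const v).const_add x)
      rwa [one_smul, InnerProductSpace.toDual_apply_apply] at this
  have key := abs_sub_sub_mul_le_of_abs_deriv_sub_le (C := β * ‖v‖ ^ 2) zero_le_one
    (fun t _ => hline t) fun t ht => by
      rw [← inner_sub_left]
      calc |⟪gradient f (x + t • v) - gradient f (x + (0:ℝ) • v), v⟫|
          ≤ ‖gradient f (x + t • v) - gradient f (x + (0:ℝ) • v)‖ * ‖v‖ :=
            abs_real_inner_le_norm _ _
        _ ≤ β * ‖x + t • v - (x + (0:ℝ) • v)‖ * ‖v‖ := by gcongr; exact hlip _ _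
        _ = β * ‖v‖ ^ 2 * t := by
            simp only [zero_smul, add_zero, add_sub_cancel_left, norm_smul, Real.norm_eq_abs,
              abs_of_nonneg ht.1]
            ring
  simpa [mul_div_right_comm] using key

theorem abs_sub_sub_smul_inner_gradient_le {E : Type*} [NormedAddCommGroup E]
    [InnerProductSpace ℝ E] [CompleteSpace E] {f : E → ℝ} {β : ℝ} (hf : Differentiable ℝ f)
    (hlip : ∀ x y, ‖gradient f x - gradient f y‖ ≤ β * ‖x - y‖) (x g : E) (η : ℝ) :
    |f x - f (x - η • g) - η * ⟪gradient f x, g⟫| ≤ β / 2 * η ^ 2 * ‖g‖ ^ 2 := by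
  have := abs_sub_sub_inner_gradient_le hf hlip x (-(η • g))
  rw [← sub_eq_add_neg, inner_neg_right, inner_smul_right, norm_neg, norm_smul,
    Real.norm_eq_abs, mul_pow, sq_abs, ← abs_neg] at this
  convert this using 1
  · congr 1; ring
  · ring

theorem ost_ranking_consistency_general {n : ℕ} (L : EuclideanSpace ℝ (Fin n) → ℝ) (β : ℝ)
    (hdiff : Differentiable ℝ L)
    (hlip : ∀ x y, ‖gradient L x - gradient L y‖ ≤ β * ‖x - y‖)
    (θ gi gj : EuclideanSpace ℝ (Fin n))
    (γ η : ℝ) (hγ : 0 < γ)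
    (hmargin : γ ≤ ⟪gradient L θ, gi⟫ - ⟪gradient L θ, gj⟫)
    (hη0 : 0 < η) (hη : η < 2 * γ / (β * (‖gi‖ ^ 2 + ‖gj‖ ^ 2))) :
    L θ - L (θ - η • gj) < L θ - L (θ - η • gi) := by
  have hi := (abs_le.1 (abs_sub_sub_smul_inner_gradient_le hdiff hlip θ gi η)).1
  have hj := (abs_le.1 (abs_sub_sub_smul_inner_gradient_le hdiff hlip θ gj η)).2
  have hstep : η * (β * (‖gi‖ ^ 2 + ‖gj‖ ^ 2)) < 2 * γ := by
    rcases lt_or_ge 0 (β * (‖gi‖ ^ 2 + ‖gj‖ ^ 2)) with hpos | hnonpos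
    · rwa [← lt_div_iff₀ hpos]
    · nlinarith
  nlinarith

theorem ost_ranking_consistency {n : ℕ} (L : EuclideanSpace ℝ (Fin n) → ℝ) (β : ℝ)
    (hβ : 0 < β)
    (hdiff : Differentiable ℝ L)
    (hlip : ∀ x y, ‖gradient L x - gradient L y‖ ≤ β * ‖x - y‖)
    (θ gi gj : EuclideanSpace ℝ (Fin n)) (hne : gi ≠ 0 ∨ gj ≠ 0)
    (γ η : ℝ) (hγ : 0 < γ)
    (hmargin : γ ≤ ⟪gradient L θ, gi⟫ - ⟪gradient L θ, gj⟫)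
    (hη0 : 0 < η) (hη : η < 2 * γ / (β * (‖gi‖ ^ 2 + ‖gj‖ ^ 2))) :
    L θ - L (θ - η • gj) < L θ - L (θ - η • gi) :=
  ost_ranking_consistency_general L β hdiff hlip θ gi gj γ η hγ hmargin hη0 hη
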